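/- arXiv:1810.02953 — 7 statements merged into one kernel-verified Lean document; each statement's English description precedes it below -/
import Mathlib

section
/- If L' is subword-closed, then for any language L and any subalphabet C ⊆ A, the interpolation product L ↑_C L' equals the plain shuffle L ⧢ L'. -/
open List

variable {A : Type*}

/-- Extract the subword of `x` at positions `K`. -/
def extractW (x : List A) (K : Finset (Fin x.length)) : List A :=
  ((List.finRange x.length).filter (fun i => i ∈ K)).map x.get

/-- `InterpW C u v x` : `x` is a shuffle of `u` and `v` with possible sharing of letters in `C`. -/
def InterpW (C : Set A) (u v x : List A) : Prop :=
  ∃ K K' : Finset (Fin x.length), K ∪ K' = Finset.univ ∧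
    extractW x K = u ∧ extractW x K' = v ∧ ∀ a ∈ extractW x (K ∩ K'), a ∈ C

/-- Interpolation product of languages. -/
def interpL (C : Set A) (L L' : Set (List A)) : Set (List A) :=
  {x | ∃ u ∈ L, ∃ v ∈ L', InterpW C u v x}

/-- Shuffle product of languages. -/
def shuffleL (L L' : Set (List A)) : Set (List A) := interpL ∅ L L'

/-- Simon's congruence: same scattered subwords of length at most `k`. -/
def SimK (k : ℕ) (u v : List A) : Prop :=
  ∀ w : List A, w.length ≤ k → (w.Sublist u ↔ w.Sublist v)

/-- Piecewise-testability: union of `∼ₖ`-classes for some `k`. -/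
def PT (L : Set (List A)) : Prop :=
  ∃ k, ∀ u v : List A, SimK k u v → (u ∈ L ↔ v ∈ L)

/-- A DFA is acyclic when every cycle is a self-loop. -/
def DFA.Acyclic {σ : Type*} (M : DFA A σ) : Prop :=
  ∀ p q (u v : List A), M.evalFrom p u = q → M.evalFrom q v = p → p = q

/-- A language is ℛ-trivial iff it is recognized by a finite acyclic DFA. -/
def RTrivial (L : Set (List A)) : Prop :=
  ∃ (σ : Type) (_ : Fintype σ) (M : DFA A σ), M.Acyclic ∧ ∀ x, x ∈ M.accepts ↔ x ∈ L

theorem stmt3 {A : Type*} (L L' : Set (List A))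
    (hdc : ∀ u v : List A, v ∈ L' → u.Sublist v → u ∈ L') (C : Set A) :
    interpL C L L' = shuffleL L L' := by
  ext x
  constructor
  · rintro ⟨u, hu, v, hv, K, K', hU, h1, h2, -⟩
    refine ⟨u, hu, extractW x (K' \ K), hdc _ _ hv ?_, K, K' \ K, ?_, h1, rfl, ?_⟩
    · rw [← h2]
      exact (List.monotone_filter_right _ (fun i hi => by simp_all [Finset.mem_sdiff])).map _
    · rw [Finset.union_sdiff_self_eq_union, hU]
    · intro a ha
      exfalso
      have : K ∩ (K' \ K) = ∅ := by
        ext i; simp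
      rw [this] at ha
      simp [extractW] at ha
  · rintro ⟨u, hu, v, hv, K, K', hU, h1, h2, h3⟩
    exact ⟨u, hu, v, hv, K, K', hU, h1, h2, fun a ha => absurd (h3 a ha) (Set.notMem_empty a)⟩
end

section
/- The interpolation product is commutative and associative on languages: L ↑_C L' = L' ↑_C L and (L ↑_C L') ↑_C L'' = L ↑_C (L' ↑_C L'') for any subalphabet C. -/
open List

variable {A : Type*}

/-!
Both identities reduce to the corresponding facts about single words. Commutativity is the
symmetry `K ↔ K'` of the definition. For associativity, read the covering `K ∪ K' = univ`
letter by letter: `x ∈ u ↑_C v` iff each letter of `x` is sent to `u`, to `v`, or, when it lies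
in `C`, to both (`Interpolates`). Given `u ∈ a ↑_C b` and `x ∈ u ↑_C w`, every letter of `x` is
then sent to a nonempty subset of `{a, b, w}`, shared only if it lies in `C`, and the letters
sent to `b` or `w` spell a word `v ∈ b ↑_C w` with `x ∈ a ↑_C v`.
-/

section Positions

variable {n : ℕ}

def tailPos (S : Finset (Fin (n + 1))) : Finset (Fin n) :=
  Finset.univ.filter (·.succ ∈ S)

@[simp] lemma mem_tailPos {S : Finset (Fin (n + 1))} {i : Fin n} :
    i ∈ tailPos S ↔ i.succ ∈ S := by
  simp [tailPos]

def consPos (b : Bool) (K : Finset (Fin n)) : Finset (Fin (n + 1)) :=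
  if b then insert 0 (K.map (Fin.succEmb n)) else K.map (Fin.succEmb n)

@[simp] lemma zero_mem_consPos {b : Bool} {K : Finset (Fin n)} :
    (0 : Fin (n + 1)) ∈ consPos b K ↔ b = true := by
  cases b <;> simp [consPos, Fin.succ_ne_zero]

@[simp] lemma succ_mem_consPos {b : Bool} {K : Finset (Fin n)} {i : Fin n} :
    i.succ ∈ consPos b K ↔ i ∈ K := by
  cases b <;> simp [consPos, Fin.succ_ne_zero]

lemma exists_eq_consPos (S : Finset (Fin (n + 1))) : ∃ b K, S = consPos b K :=
  ⟨decide (0 ∈ S), tailPos S, by ext j; cases j using Fin.cases <;> simp⟩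

lemma consPos_inter (b b' : Bool) (K K' : Finset (Fin n)) :
    consPos b K ∩ consPos b' K' = consPos (b && b') (K ∩ K') := by
  ext j; cases j using Fin.cases <;> simp

lemma consPos_union (b b' : Bool) (K K' : Finset (Fin n)) :
    consPos b K ∪ consPos b' K' = consPos (b || b') (K ∪ K') := by
  ext j; cases j using Fin.cases <;> simp

lemma consPos_eq_univ {b : Bool} {K : Finset (Fin n)} :
    consPos b K = Finset.univ ↔ b = true ∧ K = Finset.univ := by
  simp only [Finset.eq_univ_iff_forall, Fin.forall_fin_succ, zero_mem_consPos, succ_mem_consPos]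

end Positions

lemma extractW_cons_consPos (c : A) (x : List A) (b : Bool) (K : Finset (Fin x.length)) :
    extractW (c :: x) (consPos b K) = if b then c :: extractW x K else extractW x K := by
  unfold extractW
  rw [show finRange (c :: x).length = 0 :: (finRange x.length).map Fin.succ from finRange_succ]
  cases b <;> simp [List.filter_map, Function.comp_def]

section InterpW

variable {C : Set A}

lemma InterpW.symm {u v x : List A} (h : InterpW C u v x) : InterpW C v u x := by
  obtain ⟨K, K', hcov, hu, hv, hC⟩ := h
  exact ⟨K', K, by rwa [Finset.union_comm], hv, hu, by rwa [Finset.inter_comm]⟩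

lemma interpW_nil : InterpW C [] [] [] :=
  ⟨∅, ∅, by simp, rfl, rfl, nofun⟩

lemma interpW_cons_iff {c : A} {u v x : List A} :
    InterpW C u v (c :: x) ↔ ∃ b b' : Bool, (b || b') = true ∧ ((b && b') = true → c ∈ C) ∧
      ∃ u' v', InterpW C u' v' x ∧ u = (if b then c :: u' else u') ∧
        v = (if b' then c :: v' else v') := by
  constructor
  · rintro ⟨S, S', hcov, rfl, rfl, hC⟩
    obtain ⟨b, K, rfl⟩ := exists_eq_consPos S
    obtain ⟨b', K', rfl⟩ := exists_eq_consPos S'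
    rw [consPos_union, consPos_eq_univ] at hcov
    rw [consPos_inter, extractW_cons_consPos] at hC
    refine ⟨b, b', hcov.1, fun h => hC c (by simp [h]), _, _, ⟨K, K', hcov.2, rfl, rfl, ?_⟩,
      extractW_cons_consPos .., extractW_cons_consPos ..⟩
    intro a ha
    exact hC a (by split <;> simp [ha])
  · rintro ⟨b, b', hb, hbC, u', v', ⟨K, K', hcov, rfl, rfl, hC⟩, rfl, rfl⟩
    refine ⟨consPos b K, consPos b' K', by simp [consPos_union, consPos_eq_univ, hb, hcov],
      extractW_cons_consPos .., extractW_cons_consPos .., ?_⟩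
    rw [consPos_inter, extractW_cons_consPos]
    split
    · rintro a (_ | ⟨_, ha⟩)
      exacts [hbC ‹_›, hC a ha]
    · exact hC

end InterpW

inductive Interpolates (C : Set A) : List A → List A → List A → Prop
  | nil : Interpolates C [] [] []
  | left (a : A) {u v x : List A} : Interpolates C u v x → Interpolates C (a :: u) v (a :: x)
  | right (a : A) {u v x : List A} : Interpolates C u v x → Interpolates C u (a :: v) (a :: x)
  | both (a : A) {u v x : List A} :
      a ∈ C → Interpolates C u v x → Interpolates C (a :: u) (a :: v) (a :: x)

lemma interpW_iff_interpolates {C : Set A} {u v x : List A} :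
    InterpW C u v x ↔ Interpolates C u v x := by
  constructor
  · induction x generalizing u v with
    | nil =>
      rintro ⟨K, K', -, rfl, rfl, -⟩
      exact .nil
    | cons c x ih =>
      rw [interpW_cons_iff]
      rintro ⟨b, b', hb, hbC, u', v', h, rfl, rfl⟩
      cases b <;> cases b'
      exacts [absurd hb Bool.false_ne_true, .right c (ih h), .left c (ih h),
        .both c (hbC rfl) (ih h)]
  · intro h
    induction h with
    | nil => exact interpW_nil
    | left c _ ih => exact interpW_cons_iff.2 ⟨true, false, rfl, nofun, _, _, ih, rfl, rfl⟩
    | right c _ ih => exact interpW_cons_iff.2 ⟨false, true, rfl, nofun, _, _, ih, rfl, rfl⟩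
    | both c hc _ ih =>
      exact interpW_cons_iff.2 ⟨true, true, rfl, fun _ => hc, _, _, ih, rfl, rfl⟩

namespace Interpolates

variable {C : Set A}

theorem assoc {a b u w x : List A} (hab : Interpolates C a b u) (hux : Interpolates C u w x) :
    ∃ v, Interpolates C b w v ∧ Interpolates C a v x := by
  induction hux generalizing a b with
  | nil => cases hab; exact ⟨[], nil, nil⟩
  | left c _ ih =>
    cases hab with
    | left _ hab =>
      obtain ⟨v, hbw, hav⟩ := ih hab
      exact ⟨v, hbw, left c hav⟩
    | right _ hab =>
      obtain ⟨v, hbw, hav⟩ := ih hab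
      exact ⟨c :: v, left c hbw, right c hav⟩
    | both _ hc hab =>
      obtain ⟨v, hbw, hav⟩ := ih hab
      exact ⟨c :: v, left c hbw, both c hc hav⟩
  | right c _ ih =>
    obtain ⟨v, hbw, hav⟩ := ih hab
    exact ⟨c :: v, right c hbw, right c hav⟩
  | both c hc _ ih =>
    cases hab with
    | left _ hab =>
      obtain ⟨v, hbw, hav⟩ := ih hab
      exact ⟨c :: v, right c hbw, both c hc hav⟩
    | right _ hab =>
      obtain ⟨v, hbw, hav⟩ := ih hab
      exact ⟨c :: v, both c hc hbw, right c hav⟩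
    | both _ _ hab =>
      obtain ⟨v, hbw, hav⟩ := ih hab
      exact ⟨c :: v, both c hc hbw, both c hc hav⟩

end Interpolates

lemma InterpW.assoc {C : Set A} {a b u w x : List A} (hab : InterpW C a b u)
    (hux : InterpW C u w x) : ∃ v, InterpW C b w v ∧ InterpW C a v x := by
  simp only [interpW_iff_interpolates] at hab hux ⊢
  exact hab.assoc hux

section interpL

variable (C : Set A)

theorem interpL_comm (L L' : Set (List A)) : interpL C L L' = interpL C L' L := by
  ext x
  constructor <;> rintro ⟨u, hu, v, hv, h⟩ <;> exact ⟨v, hv, u, hu, h.symm⟩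

lemma interpL_assoc_subset (L L' L'' : Set (List A)) :
    interpL C (interpL C L L') L'' ⊆ interpL C L (interpL C L' L'') := by
  rintro x ⟨u, ⟨a, ha, b, hb, hab⟩, w, hw, hux⟩
  obtain ⟨v, hbw, hav⟩ := hab.assoc hux
  exact ⟨a, ha, v, ⟨b, hb, w, hw, hbw⟩, hav⟩

theorem interpL_assoc (L L' L'' : Set (List A)) :
    interpL C (interpL C L L') L'' = interpL C L (interpL C L' L'') := by
  refine (interpL_assoc_subset C L L' L'').antisymm ?_
  calc interpL C L (interpL C L' L'') = interpL C (interpL C L'' L') L := by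
        rw [interpL_comm C L, interpL_comm C L']
    _ ⊆ interpL C L'' (interpL C L' L) := interpL_assoc_subset C L'' L' L
    _ = interpL C (interpL C L L') L'' := by rw [interpL_comm C L'', interpL_comm C L']

end interpL

theorem stmt4 {A : Type*} (C : Set A) :
    (∀ L L' : Set (List A), interpL C L L' = interpL C L' L) ∧
    (∀ L L' L'' : Set (List A),
      interpL C (interpL C L L') L'' = interpL C L (interpL C L' L'')) :=
  ⟨interpL_comm C, interpL_assoc C⟩
end

section
/- If L' is a shuffle ideal (i.e., L' = L' ⧢ A*) and L is any language, then L ↑_C L' is a shuffle ideal for any subalphabet C. -/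
/-! Let `y` contain `x` as a subword, where `x` interpolates `u ∈ L` and `v ∈ L'`. Assigning every
letter of `y` outside the embedded copy of `x` to the right factor exhibits `y` as an interpolation
of `u` with a superword of `v`, and that superword lies in `L'` because `L'` is upward closed. -/

open List

variable {A : Type*}

theorem extractW_univ (x : List A) : extractW x Finset.univ = x := by
  simp [extractW, List.map_get_finRange]

theorem extractW_empty (x : List A) : extractW x ∅ = [] := by
  simp [extractW]

theorem extractW_sublist_extractW {x : List A} {K K' : Finset (Fin x.length)} (h : K ⊆ K') :
    (extractW x K).Sublist (extractW x K') :=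
  ((List.finRange x.length).monotone_filter_right (by simpa using fun i hi => h hi)).map _

theorem extractW_sublist (x : List A) (K : Finset (Fin x.length)) : (extractW x K).Sublist x := by
  simpa only [extractW_univ] using extractW_sublist_extractW (Finset.subset_univ K)

theorem extractW_map {x y : List A} (f : Fin x.length ↪o Fin y.length)
    (hf : ∀ i, x.get i = y.get (f i)) (K : Finset (Fin x.length)) :
    extractW y (K.map f.toEmbedding) = extractW x K := by
  have hpos : (List.finRange y.length).filter (· ∈ K.map f.toEmbedding)
      = ((List.finRange x.length).filter (· ∈ K)).map f := by
    -- both sides are strictly increasing lists with the same elements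
    refine List.Perm.eq_of_pairwise' (r := (· ≤ ·))
      (((List.pairwise_lt_finRange _).filter _).imp le_of_lt)
      (((List.pairwise_lt_finRange _).filter _).map (R := (· < ·)) _
        fun _ _ h => (f.strictMono h).le) ?_
    refine List.perm_of_nodup_nodup_toFinset_eq ((List.nodup_finRange _).filter _)
      (((List.nodup_finRange _).filter _).map f.injective) ?_
    ext j
    simp [Finset.mem_map]
  simp only [extractW, hpos, List.map_map]
  exact List.map_congr_left fun i _ => (hf i).symm

theorem interpW_self_nil (C : Set A) (x : List A) : InterpW C x [] x :=
  ⟨Finset.univ, ∅, Finset.union_empty _, extractW_univ x, extractW_empty x,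
    by simp [extractW_empty]⟩

theorem InterpW.sublist_left {C : Set A} {u v x : List A} (h : InterpW C u v x) : u.Sublist x := by
  obtain ⟨K, -, -, rfl, -⟩ := h
  exact extractW_sublist x K

theorem InterpW.exists_sublist_right_of_sublist {C : Set A} {u v x y : List A}
    (h : InterpW C u v x) (hxy : x.Sublist y) : ∃ v', v.Sublist v' ∧ InterpW C u v' y := by
  obtain ⟨f, hf⟩ := List.sublist_iff_exists_fin_orderEmbedding_get_eq.mp hxy
  obtain ⟨K, K', hunion, rfl, rfl, hC⟩ := h
  set e := f.toEmbedding
  set R := K'.map e ∪ (Finset.univ.map e)ᶜ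
  have hdisj : K.map e ∩ (Finset.univ.map e)ᶜ = ∅ :=
    Finset.disjoint_iff_inter_eq_empty.mp
      (disjoint_compl_right.mono_left (Finset.map_subset_map.mpr (Finset.subset_univ K)))
  refine ⟨extractW y R, ?_, K.map e, R, ?_, extractW_map f hf K, rfl, ?_⟩
  · rw [← extractW_map f hf K']
    exact extractW_sublist_extractW Finset.subset_union_left
  · rw [← Finset.union_assoc, ← Finset.map_union, hunion, Finset.union_compl]
  · rwa [Finset.inter_union_distrib_left, hdisj, Finset.union_empty, ← Finset.map_inter,
      extractW_map f hf]

theorem mem_shuffleL_univ_iff {X : Set (List A)} {y : List A} :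
    y ∈ shuffleL X Set.univ ↔ ∃ x ∈ X, x.Sublist y := by
  constructor
  · rintro ⟨x, hx, _, -, h⟩
    exact ⟨x, hx, h.sublist_left⟩
  · rintro ⟨x, hx, hxy⟩
    obtain ⟨v, -, h⟩ := (interpW_self_nil ∅ x).exists_sublist_right_of_sublist hxy
    exact ⟨x, hx, v, trivial, h⟩

theorem stmt5 {A : Type*} (L L' : Set (List A))
    (hL' : L' = shuffleL L' Set.univ) (C : Set A) :
    interpL C L L' = shuffleL (interpL C L L') Set.univ := by
  ext y
  rw [mem_shuffleL_univ_iff]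
  constructor
  · exact fun hy => ⟨y, hy, List.Sublist.refl y⟩
  · rintro ⟨x, ⟨u, hu, v, hv, h⟩, hxy⟩
    obtain ⟨v', hvv', h'⟩ := h.exists_sublist_right_of_sublist hxy
    have hv' : v' ∈ L' := hL' ▸ mem_shuffleL_univ_iff.mpr ⟨v, hv, hvv'⟩
    exact ⟨u, hu, v', hv', h'⟩
end

section
/- If a family 𝔉 of languages over A is closed under binary intersections and under inverse images of monoid morphisms A* → A*, and L₁, L₂ ∈ 𝔉 use disjoint subalphabets, then L₁ ⧢ L₂ ∈ 𝔉. -/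
open List

variable {A : Type*}

/-!
Because the alphabets are disjoint, an interleaving `x` of `u ∈ A₁*` and `v ∈ A₂*` is determined
by `x` alone: `u` is `x` with the letters of `A₂` erased and `v` is `x` with those of `A₁` erased.
Hence `L₁ ⧢ L₂ = e_{A₂}⁻¹(L₁) ∩ e_{A₁}⁻¹(L₂)`, and erasing maps are monoid morphisms.
-/

section Erasure

variable {B : Set A}

open Classical in
/-- The erasing morphism `e_B` of the paper. -/
noncomputable def eraseLetters (B : Set A) (x : List A) : List A :=
  x.filter fun a => a ∉ B

@[simp]
theorem eraseLetters_nil : eraseLetters B [] = [] := rfl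

theorem eraseLetters_append (x y : List A) :
    eraseLetters B (x ++ y) = eraseLetters B x ++ eraseLetters B y :=
  List.filter_append x y

end Erasure

section Extract

variable {x : List A} {K : Finset (Fin x.length)}

theorem get_mem_extractW {i : Fin x.length} (hi : i ∈ K) : x.get i ∈ extractW x K :=
  List.mem_map_of_mem (by simpa using hi)

theorem exists_get_eq_of_mem_extractW {a : A} (ha : a ∈ extractW x K) :
    ∃ i ∈ K, x.get i = a := by
  obtain ⟨i, hi, rfl⟩ := List.mem_map.mp ha
  exact ⟨i, by simpa using hi, rfl⟩

theorem extractW_eq_eraseLetters {B : Set A} (hK : ∀ i, i ∈ K ↔ x.get i ∉ B) :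
    extractW x K = eraseLetters B x := by
  classical
  unfold extractW eraseLetters
  conv_rhs => rw [← List.map_get_finRange x]
  rw [List.filter_map]
  exact congrArg _ (List.filter_congr fun i _ => by simp [hK i])

theorem mem_iff_get_notMem_of_cover {K' : Finset (Fin x.length)} {A₁ A₂ : Set A}
    (hdisj : Disjoint A₁ A₂) (hcover : K ∪ K' = Finset.univ)
    (hK : ∀ i ∈ K, x.get i ∈ A₁) (hK' : ∀ i ∈ K', x.get i ∈ A₂) (i : Fin x.length) :
    i ∈ K ↔ x.get i ∉ A₂ := by
  refine ⟨fun hi => Set.disjoint_left.mp hdisj (hK i hi), fun hi => ?_⟩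
  have : i ∈ K ∪ K' := hcover ▸ Finset.mem_univ i
  exact (Finset.mem_union.mp this).resolve_right fun hi' => hi (hK' i hi')

end Extract

theorem interpW_empty_iff_eraseLetters {A₁ A₂ : Set A} {u v x : List A}
    (hdisj : Disjoint A₁ A₂) (hu : ∀ a ∈ u, a ∈ A₁) (hv : ∀ a ∈ v, a ∈ A₂) :
    InterpW ∅ u v x ↔ eraseLetters A₂ x = u ∧ eraseLetters A₁ x = v := by
  classical
  constructor
  · rintro ⟨K, K', hcover, rfl, rfl, -⟩
    have hK : ∀ i ∈ K, x.get i ∈ A₁ := fun i hi => hu _ (get_mem_extractW hi)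
    have hK' : ∀ i ∈ K', x.get i ∈ A₂ := fun i hi => hv _ (get_mem_extractW hi)
    exact ⟨(extractW_eq_eraseLetters (mem_iff_get_notMem_of_cover hdisj hcover hK hK')).symm,
      (extractW_eq_eraseLetters (mem_iff_get_notMem_of_cover hdisj.symm
        ((Finset.union_comm _ _).trans hcover) hK' hK)).symm⟩
  · rintro ⟨rfl, rfl⟩
    set K := Finset.univ.filter fun i => x.get i ∉ A₂
    set K' := Finset.univ.filter fun i => x.get i ∉ A₁
    have hK : extractW x K = eraseLetters A₂ x := extractW_eq_eraseLetters (by simp [K])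
    refine ⟨K, K', ?_, hK, extractW_eq_eraseLetters (by simp [K']), fun a ha => ?_⟩
    · ext i
      simpa [K, K', or_iff_not_imp_left] using fun h => Set.disjoint_right.mp hdisj h
    · -- a shared position would carry a letter of `u` lying in neither alphabet
      obtain ⟨i, hi, -⟩ := exists_get_eq_of_mem_extractW ha
      obtain ⟨hi₁, hi₂⟩ := Finset.mem_inter.mp hi
      exact absurd (hu _ (hK ▸ get_mem_extractW hi₁)) (Finset.mem_filter.mp hi₂).2

theorem shuffleL_eq_preimage_inter {L₁ L₂ : Set (List A)} {A₁ A₂ : Set A}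
    (hdisj : Disjoint A₁ A₂)
    (h₁ : ∀ w ∈ L₁, ∀ a ∈ w, a ∈ A₁) (h₂ : ∀ w ∈ L₂, ∀ a ∈ w, a ∈ A₂) :
    shuffleL L₁ L₂ = eraseLetters A₂ ⁻¹' L₁ ∩ eraseLetters A₁ ⁻¹' L₂ := by
  ext x
  constructor
  · rintro ⟨u, hu, v, hv, hx⟩
    obtain ⟨rfl, rfl⟩ := (interpW_empty_iff_eraseLetters hdisj (h₁ u hu) (h₂ v hv)).mp hx
    exact ⟨hu, hv⟩
  · rintro ⟨hu, hv⟩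
    exact ⟨_, hu, _, hv,
      (interpW_empty_iff_eraseLetters hdisj (h₁ _ hu) (h₂ _ hv)).mpr ⟨rfl, rfl⟩⟩

theorem stmt9 {A : Type*} (F : Set (Set (List A)))
    (hcap : ∀ L L', L ∈ F → L' ∈ F → L ∩ L' ∈ F)
    (hmor : ∀ f : List A → List A, f [] = [] →
      (∀ x y : List A, f (x ++ y) = f x ++ f y) → ∀ L ∈ F, f ⁻¹' L ∈ F)
    (L₁ L₂ : Set (List A)) (hF₁ : L₁ ∈ F) (hF₂ : L₂ ∈ F)
    (A₁ A₂ : Set A) (hdisj : Disjoint A₁ A₂)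
    (h₁ : ∀ w ∈ L₁, ∀ a ∈ w, a ∈ A₁) (h₂ : ∀ w ∈ L₂, ∀ a ∈ w, a ∈ A₂) :
    shuffleL L₁ L₂ ∈ F := by
  rw [shuffleL_eq_preimage_inter hdisj h₁ h₂]
  exact hcap _ _ (hmor _ eraseLetters_nil eraseLetters_append _ hF₁)
    (hmor _ eraseLetters_nil eraseLetters_append _ hF₂)
end

section
/- Let 𝒜 be a finite complete acyclic DFA recognizing L, let w ∈ A* and C ⊆ A. Then the powerset automaton of the product NFA ℬ recognizing L ↑_C w (with states Q × {0,…,|w|} and transitions (p,k) ⟶^a {(p·a,k)} ∪ {(p,k+1) if a = w[k+1]} ∪ {(p·a,k+1) if a = w[k+1] and a ∈ C}) is acyclic: every cycle in the powerset automaton is a self-loop. -/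
open List

variable {A : Type*}

/-- The transition relation of the product NFA `ℬ` for `L ↑_C w`. -/
def Bstep {A σ : Type*} (M : DFA A σ) (w : List A) (C : Set A) :
    σ × ℕ → A → Set (σ × ℕ) := fun s a =>
  {q | q = (M.step s.1 a, s.2) ∨
    ∃ h : s.2 < w.length, w.get ⟨s.2, h⟩ = a ∧
      (q = (s.1, s.2 + 1) ∨ (a ∈ C ∧ q = (M.step s.1 a, s.2 + 1)))}

/-!
Cut a state `S` of the powerset automaton into levels `{p | (p, k) ∈ S}`. Reading `a` maps level
`k` to its image under `· a`, plus the states of level `k - 1` when `a` is the `k`-th letter of `w`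
(the `C`-transitions add nothing once level `k - 1` is stable). Suppose `S` returns to itself along a
word `L`. By induction on `k`, every state of level `k` is stable under the letters of `L`, and no
prefix of `L` changes level `k`: given this for level `k - 1`, a state of level `k` is either
injected from level `k - 1`, hence stable, or the image under `L` of a state of level `k`; since
strict reachability is well founded in an acyclic automaton, the latter is stable too. Hence any
cycle `S → T → S` has `T = S`.
-/

namespace DFA

variable {A σ : Type*} {M : DFA A σ}

variable (M) in
def IsStable (B : Set A) (p : σ) : Prop := ∀ a ∈ B, M.step p a = p

theorem IsStable.evalFrom_eq {B : Set A} {p : σ} (hp : M.IsStable B p) {x : List A}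
    (hx : ∀ a ∈ x, a ∈ B) : M.evalFrom p x = p := by
  induction x with
  | nil => rfl
  | cons a x ih =>
    rw [evalFrom_cons, hp a (hx a List.mem_cons_self)]
    exact ih fun b hb => hx b (List.mem_cons_of_mem a hb)

theorem image_evalFrom_eq_of_isStable {B : Set A} {Y : Set σ} (hY : ∀ p ∈ Y, M.IsStable B p)
    {x : List A} (hx : ∀ a ∈ x, a ∈ B) : (M.evalFrom · x) '' Y = Y :=
  Set.EqOn.image_eq_self fun p hp => (hY p hp).evalFrom_eq hx

theorem Acyclic.isStable_of_evalFrom_eq (hac : M.Acyclic) {p : σ} {x : List A}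
    (hx : M.evalFrom p x = p) : M.IsStable {a | a ∈ x} p := by
  intro a ha
  obtain ⟨s, t, rfl⟩ := List.append_of_mem ha
  have prefix_fixes : ∀ y z, y ++ z = s ++ a :: t → M.evalFrom p y = p := fun y z hyz =>
    (hac p _ y z rfl (by rw [← evalFrom_of_append, hyz, hx])).symm
  calc M.step p a = M.step (M.evalFrom p s) a := by rw [prefix_fixes s (a :: t) rfl]
    _ = M.evalFrom p (s ++ [a]) := (evalFrom_append_singleton ..).symm
    _ = p := prefix_fixes _ t (by simp)

theorem Acyclic.wellFounded [Finite σ] (hac : M.Acyclic) :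
    WellFounded fun p q : σ => p ≠ q ∧ ∃ x, M.evalFrom p x = q := by
  have : IsTrans σ fun p q => p ≠ q ∧ ∃ x, M.evalFrom p x = q :=
    ⟨fun p q r ⟨hpq, x, hx⟩ ⟨_, y, hy⟩ =>
      ⟨fun hpr => hpq (hac p q x y hx (hpr ▸ hy)), x ++ y, by rw [evalFrom_of_append, hx, hy]⟩⟩
  have : Std.Irrefl fun p q : σ => p ≠ q ∧ ∃ x, M.evalFrom p x = q := ⟨fun _ h => h.1 rfl⟩
  exact Finite.wellFounded_of_trans_of_irrefl _

variable (M) in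
def evalInflow (f : A → Set σ) (Y : Set σ) (x : List A) : Set σ :=
  x.foldl (fun Y a => (M.step · a) '' Y ∪ f a) Y

theorem evalInflow_append_singleton (f : A → Set σ) (Y : Set σ) (x : List A) (a : A) :
    M.evalInflow f Y (x ++ [a]) = (M.step · a) '' M.evalInflow f Y x ∪ f a := by
  simp only [evalInflow, List.foldl_append, List.foldl_cons, List.foldl_nil]

theorem evalInflow_eq_of_isStable {B : Set A} {f : A → Set σ} {Y : Set σ} {x : List A}
    (hx : ∀ a ∈ x, a ∈ B) (hf : ∀ a ∈ x, ∀ p ∈ f a, M.IsStable B p) :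
    M.evalInflow f Y x = (M.evalFrom · x) '' Y ∪ {p | ∃ a ∈ x, p ∈ f a} := by
  induction x using List.reverseRecOn with
  | nil => simp [evalInflow]
  | append_singleton x a ih =>
    have hxa : ∀ b ∈ x, b ∈ x ++ [a] := fun b hb => List.mem_append_left _ hb
    have ha : a ∈ B := hx a (by simp)
    rw [evalInflow_append_singleton, ih (fun b hb => hx b (hxa b hb))
      (fun b hb => hf b (hxa b hb)), Set.image_union, Set.image_image,
      Set.EqOn.image_eq_self (s := {p | ∃ b ∈ x, p ∈ f b})
        fun p ⟨b, hb, hp⟩ => hf b (hxa b hb) p hp a ha]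
    ext p
    simp only [evalFrom_of_append, evalFrom_singleton, Set.mem_union, List.mem_append,
      List.mem_singleton]
    aesop

theorem Acyclic.isStable_of_evalInflow_eq [Finite σ] (hac : M.Acyclic) {f : A → Set σ}
    {Y : Set σ} {L : List A} (hf : ∀ a ∈ L, ∀ p ∈ f a, M.IsStable {b | b ∈ L} p)
    (hY : M.evalInflow f Y L = Y) : ∀ p ∈ Y, M.IsStable {b | b ∈ L} p := by
  rw [evalInflow_eq_of_isStable (fun _ => id) hf] at hY
  intro p
  induction p using hac.wellFounded.induction with
  | _ p ih =>
    intro hp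
    rw [← hY] at hp
    obtain ⟨q, hq, hqp⟩ | ⟨a, ha, hpa⟩ := hp
    · -- `q` reaches `p`; if `q ≠ p`, then `q` is stable by induction, so `p = q·L = q`
      by_cases hpq : q = p
      · subst hpq
        exact hac.isStable_of_evalFrom_eq hqp
      · exact absurd (((ih q ⟨hpq, L, hqp⟩ hq).evalFrom_eq fun _ => id).symm.trans hqp) hpq
    · exact hf a ha p hpa

theorem evalInflow_eq_of_isPrefix {B : Set A} {f : A → Set σ} {Y : Set σ} {L x : List A}
    (hL : ∀ a ∈ L, a ∈ B) (hf : ∀ a ∈ L, ∀ p ∈ f a, M.IsStable B p)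
    (hYst : ∀ p ∈ Y, M.IsStable B p) (hY : M.evalInflow f Y L = Y) (hx : x <+: L) :
    M.evalInflow f Y x = Y := by
  have hxL : ∀ a ∈ x, a ∈ L := fun a ha => hx.subset ha
  rw [evalInflow_eq_of_isStable hL hf, image_evalFrom_eq_of_isStable hYst hL] at hY
  rw [evalInflow_eq_of_isStable (fun a ha => hL a (hxL a ha)) (fun a ha => hf a (hxL a ha)),
    image_evalFrom_eq_of_isStable hYst fun a ha => hL a (hxL a ha)]
  refine Set.union_eq_self_of_subset_right fun p ⟨a, ha, hpa⟩ => ?_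
  rw [← hY]
  exact Or.inr ⟨a, hxL a ha, hpa⟩

end DFA

namespace Bstep

variable {A σ : Type*} {M : DFA A σ} {w : List A} {C : Set A} {N : NFA A (σ × ℕ)}

def slice (S : Set (σ × ℕ)) (k : ℕ) : Set σ := {p | (p, k) ∈ S}

/-- The states entering level `k` on reading `a`, by the transitions `(p, j) → (p, j + 1)`;
`w[j]` is the letter written `w[j+1]` in the paper. -/
def inflow (w : List A) (S : Set (σ × ℕ)) (k : ℕ) (a : A) : Set σ :=
  {p | ∃ j, j + 1 = k ∧ p ∈ slice S j ∧ w[j]? = some a}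

theorem slice_stepSet (hN : N.step = Bstep M w C) {S : Set (σ × ℕ)} {a : A} {k : ℕ}
    (hS : ∀ j, j + 1 = k → ∀ p ∈ slice S j, M.step p a = p) :
    slice (N.stepSet S a) k = (M.step · a) '' slice S k ∪ inflow w S k a := by
  ext p
  simp only [slice, inflow, NFA.mem_stepSet, hN, Bstep, Set.mem_union, Set.mem_image,
    List.getElem?_eq_some_iff, List.get_eq_getElem, Prod.ext_iff, Set.mem_ofPred_eq]
  constructor
  · rintro ⟨⟨q, j⟩, hq, ⟨rfl, rfl⟩ | ⟨hj, rfl, ⟨rfl, rfl⟩ | ⟨-, rfl, rfl⟩⟩⟩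
    · exact Or.inl ⟨q, hq, rfl⟩
    · exact Or.inr ⟨j, rfl, hq, hj, rfl⟩
    · -- the `C`-transition adds nothing new, as `q` is already fixed by the letter read
      rw [hS j rfl q hq]
      exact Or.inr ⟨j, rfl, hq, hj, rfl⟩
  · rintro (⟨q, hq, rfl⟩ | ⟨j, rfl, hp, hj, rfl⟩)
    · exact ⟨(q, k), hq, Or.inl ⟨rfl, rfl⟩⟩
    · exact ⟨(p, j), hp, Or.inr ⟨hj, rfl, Or.inl ⟨rfl, rfl⟩⟩⟩

variable (M N) in
def SettledLevel (L : List A) (S : Set (σ × ℕ)) (j : ℕ) : Prop :=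
  (∀ p ∈ slice S j, M.IsStable {a | a ∈ L} p) ∧
    ∀ x, x <+: L → slice (N.evalFrom S x) j = slice S j

theorem slice_evalFrom (hN : N.step = Bstep M w C) {L : List A} {S : Set (σ × ℕ)} {k : ℕ}
    (hlow : ∀ j, j + 1 = k → SettledLevel M N L S j) {x : List A} (hx : x <+: L) :
    slice (N.evalFrom S x) k = M.evalInflow (inflow w S k) (slice S k) x := by
  induction x using List.reverseRecOn with
  | nil => rfl
  | append_singleton x a ih =>
    have hxL : x <+: L := (List.prefix_append x [a]).trans hx
    have haL : a ∈ L := hx.subset (by simp)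
    have hlow_x : ∀ j, j + 1 = k → slice (N.evalFrom S x) j = slice S j :=
      fun j hj => (hlow j hj).2 x hxL
    have hinflow : inflow w (N.evalFrom S x) k a = inflow w S k a := by
      ext p
      simp only [inflow, Set.mem_ofPred_eq]
      refine exists_congr fun j => and_congr_right fun hj => ?_
      rw [hlow_x j hj]
    rw [NFA.evalFrom_append, NFA.evalFrom_singleton, DFA.evalInflow_append_singleton, ← ih hxL,
      slice_stepSet hN fun j hj p hp => (hlow j hj).1 p (hlow_x j hj ▸ hp) a haL, hinflow]

theorem settledLevel_of_pred [Finite σ] (hac : M.Acyclic) (hN : N.step = Bstep M w C)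
    {L : List A} {S : Set (σ × ℕ)} (hS : N.evalFrom S L = S) {k : ℕ}
    (hlow : ∀ j, j + 1 = k → SettledLevel M N L S j) : SettledLevel M N L S k := by
  have hf : ∀ a ∈ L, ∀ p ∈ inflow w S k a, M.IsStable {b | b ∈ L} p := by
    rintro a - p ⟨j, hj, hp, -⟩
    exact (hlow j hj).1 p hp
  have hY : M.evalInflow (inflow w S k) (slice S k) L = slice S k := by
    rw [← slice_evalFrom hN hlow (List.prefix_refl L), hS]
  have hYst := hac.isStable_of_evalInflow_eq hf hY
  exact ⟨hYst, fun x hx => (slice_evalFrom hN hlow hx).trans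
    (DFA.evalInflow_eq_of_isPrefix (fun _ => id) hf hYst hY hx)⟩

theorem settledLevel [Finite σ] (hac : M.Acyclic) (hN : N.step = Bstep M w C)
    {L : List A} {S : Set (σ × ℕ)} (hS : N.evalFrom S L = S) : ∀ k, SettledLevel M N L S k
  | 0 => settledLevel_of_pred hac hN hS fun j hj => absurd hj j.succ_ne_zero
  | k + 1 => settledLevel_of_pred hac hN hS fun j hj => by
    obtain rfl : j = k := Nat.succ_injective hj
    exact settledLevel hac hN hS j

theorem acyclic_toDFA [Finite σ] (hac : M.Acyclic) (hN : N.step = Bstep M w C) :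
    N.toDFA.Acyclic := by
  intro S T u v (hu : N.evalFrom S u = T) (hv : N.evalFrom T v = S)
  have hS : N.evalFrom S (u ++ v) = S := by rw [NFA.evalFrom_append, hu, hv]
  ext ⟨p, k⟩
  have hslice := (settledLevel hac hN hS k).2 u (List.prefix_append u v)
  rw [hu] at hslice
  exact (Set.ext_iff.1 hslice p).symm

end Bstep

theorem stmt11 {A σ : Type*} [Fintype σ] (M : DFA A σ) (hac : M.Acyclic)
    (w : List A) (C : Set A) :
    (NFA.mk (Bstep M w C) {(M.start, 0)}
      {s : σ × ℕ | s.1 ∈ M.accept ∧ s.2 = w.length}).toDFA.Acyclic := by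
  exact Bstep.acyclic_toDFA hac rfl
end

section
/- If L is regular and ℛ-trivial and F is a finite language, then L ↑_C F is ℛ-trivial, for any subalphabet C. -/
open List

variable {A : Type*}

/-!
Since the interpolation product distributes over unions and ℛ-trivial languages are closed
under union, it suffices to treat `F = {v}`. If `M` is a finite acyclic automaton for `L`,
the subset automaton of the nondeterministic automaton on pairs (state of `M`, position in `v`)
recognizes `L ↑_C {v}`; its states are kept as layers indexed by the position in `v`.

It is acyclic. Along a cycle labelled `z`, layer `j` receives inflow only from layer `j - 1`,
whose states are, by induction on `j`, fixed by every letter of `z`. Once all such fixed points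
are added, layer `j` evolves by plain images under `M`, and a word that permutes a finite set of
states of an acyclic automaton fixes each of them. So every layer consists of fixed points of
the letters of `z`, the states can only grow along the cycle, and the cycle is a self-loop.
-/

section Positions

variable {n : ℕ}

def Finset.finCons (b : Bool) (K : Finset (Fin n)) : Finset (Fin (n + 1)) :=
  Finset.univ.filter fun i => Fin.cases b (fun j => decide (j ∈ K)) i = true

def Finset.finTail (K : Finset (Fin (n + 1))) : Finset (Fin n) :=
  Finset.univ.filter fun i => i.succ ∈ K

@[simp] lemma Finset.zero_mem_finCons {b : Bool} {K : Finset (Fin n)} :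
    0 ∈ K.finCons b ↔ b = true := by
  simp [Finset.finCons]

@[simp] lemma Finset.succ_mem_finCons {b : Bool} {K : Finset (Fin n)} {i : Fin n} :
    i.succ ∈ K.finCons b ↔ i ∈ K := by
  simp [Finset.finCons]

@[simp] lemma Finset.mem_finTail {K : Finset (Fin (n + 1))} {i : Fin n} :
    i ∈ K.finTail ↔ i.succ ∈ K := by
  simp [Finset.finTail]

@[simp] lemma Finset.finTail_finCons (b : Bool) (K : Finset (Fin n)) :
    (K.finCons b).finTail = K := by
  ext i; simp

@[simp] lemma Finset.finTail_inter (K K' : Finset (Fin (n + 1))) :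
    (K ∩ K').finTail = K.finTail ∩ K'.finTail := by
  ext i; simp

end Positions

lemma extractW_cons (a : A) (x : List A) (K : Finset (Fin (x.length + 1))) :
    extractW (a :: x) K =
      if 0 ∈ K then a :: extractW x K.finTail else extractW x K.finTail := by
  change List.map _ (List.filter _ (List.finRange (x.length + 1))) = _
  rw [List.finRange_succ, List.filter_cons, List.filter_map]
  by_cases h0 : 0 ∈ K <;> simp [h0, extractW, Function.comp_def]

lemma interpW_nil_s13 {C : Set A} {u v : List A} : InterpW C u v [] ↔ u = [] ∧ v = [] := by
  constructor
  · rintro ⟨K, K', -, rfl, rfl, -⟩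
    simp [extractW]
  · rintro ⟨rfl, rfl⟩
    exact ⟨∅, ∅, by ext i; exact i.elim0, rfl, rfl, by simp [extractW]⟩

section InterpWCons

variable {C : Set A} {a : A} {u v x : List A}

lemma exists_of_interpW_cons (h : InterpW C u v (a :: x)) :
    ∃ b b' : Bool, (b || b') = true ∧ ((b && b') = true → a ∈ C) ∧ ∃ u' v', InterpW C u' v' x ∧
      u = (if b then a :: u' else u') ∧ v = (if b' then a :: v' else v') := by
  obtain ⟨K, K', hcov, rfl, rfl, hC⟩ := h
  refine ⟨decide (0 ∈ K), decide (0 ∈ K'), ?_, fun h0 => hC a ?_, extractW x K.finTail,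
    extractW x K'.finTail, ⟨_, _, ?_, rfl, rfl, fun c hc => hC c ?_⟩, ?_, ?_⟩
  · simpa using Finset.ext_iff.mp hcov 0
  · simp_all [extractW_cons]
  · ext i
    simpa using Finset.ext_iff.mp hcov i.succ
  · rw [extractW_cons]
    split_ifs <;> simp [hc]
  · by_cases h0 : 0 ∈ K <;> simp [extractW_cons, h0]
  · by_cases h0 : 0 ∈ K' <;> simp [extractW_cons, h0]

lemma interpW_cons_of_bool (b b' : Bool) (hbb' : (b || b') = true)
    (hbC : (b && b') = true → a ∈ C) (h : InterpW C u v x) :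
    InterpW C (if b then a :: u else u) (if b' then a :: v else v) (a :: x) := by
  obtain ⟨K, K', hcov, rfl, rfl, hC⟩ := h
  refine ⟨K.finCons b, K'.finCons b', ?_, ?_, ?_, ?_⟩
  · ext i
    cases i using Fin.cases
    · simpa using hbb'
    · simpa using Finset.ext_iff.mp hcov _
  · simp [extractW_cons]
  · simp [extractW_cons]
  · rw [extractW_cons, Finset.finTail_inter, Finset.finTail_finCons, Finset.finTail_finCons]
    split_ifs with h0
    · simp only [Finset.mem_inter, Finset.zero_mem_finCons] at h0
      simpa [hbC (by simp [h0])] using hC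
    · exact hC

lemma interpW_cons :
    InterpW C u v (a :: x) ↔
      (∃ u', u = a :: u' ∧ InterpW C u' v x) ∨
      (∃ v', v = a :: v' ∧ InterpW C u v' x) ∨
      (a ∈ C ∧ ∃ u' v', u = a :: u' ∧ v = a :: v' ∧ InterpW C u' v' x) := by
  constructor
  · intro h
    obtain ⟨b, b', hbb', hbC, u', v', h, rfl, rfl⟩ := exists_of_interpW_cons h
    cases b <;> cases b' <;> simp_all
  · rintro (⟨u', rfl, h⟩ | ⟨v', rfl, h⟩ | ⟨hC, u', v', rfl, rfl, h⟩)
    · simpa using interpW_cons_of_bool true false rfl (by simp) h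
    · simpa using interpW_cons_of_bool false true rfl (by simp) h
    · simpa using interpW_cons_of_bool true true rfl (fun _ => hC) h

end InterpWCons

lemma interpL_empty (C : Set A) (L : Set (List A)) : interpL C L ∅ = ∅ := by
  ext x; simp [interpL]

lemma interpL_insert (C : Set A) (L F : Set (List A)) (v : List A) :
    interpL C L (insert v F) = interpL C L {v} ∪ interpL C L F := by
  ext x
  simp only [interpL, Set.mem_union, Set.mem_insert_iff, Set.mem_singleton_iff]
  grind

lemma rTrivial_empty : RTrivial (∅ : Set (List A)) :=
  ⟨Unit, inferInstance, ⟨fun _ _ => (), (), ∅⟩, fun _ _ _ _ _ _ => rfl, fun _ => Iff.rfl⟩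

universe u

lemma DFA.evalFrom_union {σ₁ σ₂ : Type u} (M₁ : DFA A σ₁) (M₂ : DFA A σ₂) (s : σ₁ × σ₂)
    (x : List A) : (M₁.union M₂).evalFrom s x = (M₁.evalFrom s.1 x, M₂.evalFrom s.2 x) := by
  induction x generalizing s with
  | nil => rfl
  | cons a x ih => exact ih _

lemma DFA.Acyclic.union {σ₁ σ₂ : Type u} {M₁ : DFA A σ₁} {M₂ : DFA A σ₂} (h₁ : M₁.Acyclic)
    (h₂ : M₂.Acyclic) : (M₁.union M₂).Acyclic := by
  intro p q u w hu hw
  simp only [DFA.evalFrom_union, Prod.ext_iff] at hu hw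
  exact Prod.ext (h₁ _ _ _ _ hu.1 hw.1) (h₂ _ _ _ _ hu.2 hw.2)

lemma RTrivial.union {L₁ L₂ : Set (List A)} (h₁ : RTrivial L₁) (h₂ : RTrivial L₂) :
    RTrivial (L₁ ∪ L₂) := by
  obtain ⟨σ₁, _, M₁, hM₁, hL₁⟩ := h₁
  obtain ⟨σ₂, _, M₂, hM₂, hL₂⟩ := h₂
  refine ⟨σ₁ × σ₂, inferInstance, M₁.union M₂, DFA.Acyclic.union hM₁ hM₂, fun x => ?_⟩
  rw [DFA.accepts_union, Language.mem_add, hL₁, hL₂, Set.mem_union]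

namespace DFA

variable {σ : Type*} {M : DFA A σ}

lemma Acyclic.step_eq_of_evalFrom_eq (hM : M.Acyclic) {p : σ} {z : List A}
    (h : M.evalFrom p z = p) : ∀ a ∈ z, M.step p a = p := by
  induction z with
  | nil => simp
  | cons b z ih =>
    have hb : M.step p b = p := (hM p _ [b] z rfl h).symm
    rw [evalFrom_cons, hb] at h
    exact List.forall_mem_cons.mpr ⟨hb, ih h⟩

open Classical in
noncomputable def ancestors [Fintype σ] (M : DFA A σ) (p : σ) : Finset σ :=
  Finset.univ.filter fun q => ∃ w, M.evalFrom q w = p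

lemma mem_ancestors [Fintype σ] {p q : σ} : q ∈ M.ancestors p ↔ ∃ w, M.evalFrom q w = p := by
  simp [ancestors]

lemma ancestors_subset_evalFrom [Fintype σ] (p : σ) (w : List A) :
    M.ancestors p ⊆ M.ancestors (M.evalFrom p w) := by
  intro q hq
  obtain ⟨w', rfl⟩ := mem_ancestors.mp hq
  exact mem_ancestors.mpr ⟨w' ++ w, evalFrom_of_append _ _ _ _⟩

lemma Acyclic.ancestors_ssubset_evalFrom [Fintype σ] (hM : M.Acyclic) {p : σ} {w : List A}
    (hne : M.evalFrom p w ≠ p) : M.ancestors p ⊂ M.ancestors (M.evalFrom p w) := by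
  refine Finset.ssubset_iff_subset_ne.mpr ⟨ancestors_subset_evalFrom p w, fun heq => hne ?_⟩
  have hself : M.evalFrom p w ∈ M.ancestors p := heq ▸ mem_ancestors.mpr ⟨[], rfl⟩
  obtain ⟨w', hw'⟩ := mem_ancestors.mp hself
  exact (hM p _ w w' rfl hw').symm

/-- The number of ancestors of a state never decreases along a word, and strictly increases
unless the state is fixed. -/
lemma Acyclic.evalFrom_eq_of_image_eq [Fintype σ] [DecidableEq σ] (hM : M.Acyclic)
    {X : Finset σ} {z : List A} (h : X.image (M.evalFrom · z) = X) :
    ∀ p ∈ X, M.evalFrom p z = p := by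
  have hinj : Set.InjOn (M.evalFrom · z) X := Finset.injOn_of_card_image_eq (by rw [h])
  have hsum : ∑ p ∈ X, (M.ancestors p).card = ∑ p ∈ X, (M.ancestors (M.evalFrom p z)).card := by
    rw [← Finset.sum_image (f := fun q => (M.ancestors q).card) hinj, h]
  intro p hp
  by_contra hne
  refine hsum.not_lt (Finset.sum_lt_sum (fun q _ => ?_) ⟨p, hp, ?_⟩)
  · exact Finset.card_le_card (ancestors_subset_evalFrom q z)
  · exact Finset.card_lt_card (hM.ancestors_ssubset_evalFrom hne)

section FixedPoints

variable [Fintype σ] [DecidableEq σ]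

def fixedPts (M : DFA A σ) (z : List A) : Finset σ :=
  Finset.univ.filter fun p => ∀ a ∈ z, M.step p a = p

lemma mem_fixedPts {z : List A} {p : σ} :
    p ∈ M.fixedPts z ↔ ∀ a ∈ z, M.step p a = p := by
  simp [DFA.fixedPts]

lemma fixedPts_congr {z z' : List A} (h : ∀ a, a ∈ z ↔ a ∈ z') :
    M.fixedPts z = M.fixedPts z' := by
  ext p; simp only [mem_fixedPts, h]

lemma image_step_of_subset_fixedPts {z : List A} {a : A} (ha : a ∈ z)
    {X : Finset σ} (hX : X ⊆ M.fixedPts z) : X.image (M.step · a) = X :=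
  (Finset.image_congr fun _ hp => mem_fixedPts.mp (hX hp) a ha).trans Finset.image_id'

end FixedPoints

end DFA

lemma List.drop_castSucc_eq_cons (v : List A) (k : Fin v.length) :
    v.drop k.castSucc = v.get k :: v.drop k.succ :=
  List.drop_eq_getElem_cons k.isLt

lemma List.exists_of_drop_eq_cons {v w : List A} {a : A} {j : Fin (v.length + 1)}
    (h : v.drop j = a :: w) :
    ∃ k : Fin v.length, j = k.castSucc ∧ v.get k = a ∧ w = v.drop k.succ := by
  have hj : (j : ℕ) < v.length := by
    by_contra hj
    simp [List.drop_eq_nil_of_le (not_lt.mp hj)] at h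
  refine ⟨⟨j, hj⟩, rfl, ?_⟩
  rw [List.drop_eq_getElem_cons hj, List.cons.injEq] at h
  exact ⟨h.1, h.2.symm⟩

section Construction

variable {σ : Type*} [DecidableEq σ] [DecidableEq A] (M : DFA A σ) (v : List A) (C : Set A)
  [DecidablePred (· ∈ C)]

def inflow (T : Fin (v.length + 1) → Finset σ) (a : A) : Fin (v.length + 1) → Finset σ :=
  Fin.cases ∅ fun k =>
    if v.get k = a then
      T k.castSucc ∪ if a ∈ C then (T k.castSucc).image (M.step · a) else ∅
    else ∅

/-- Layer `j` of a state holds the states `M.eval u` for the words `u` such that the input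
read so far interpolates `u` with `v.take j`. -/
def interpDFA : DFA A (Fin (v.length + 1) → Finset σ) where
  step T a j := (T j).image (M.step · a) ∪ inflow M v C T a j
  start j := if j = 0 then {M.start} else ∅
  accept := {T | ∃ q ∈ T (Fin.last _), q ∈ M.accept}

variable {M v C}

@[simp] lemma inflow_zero (T : Fin (v.length + 1) → Finset σ) (a : A) :
    inflow M v C T a 0 = ∅ := rfl

lemma mem_inflow_succ {T : Fin (v.length + 1) → Finset σ} {a : A} {k : Fin v.length} {q : σ} :
    q ∈ inflow M v C T a k.succ ↔
      v.get k = a ∧ ∃ p ∈ T k.castSucc, q = p ∨ (a ∈ C ∧ q = M.step p a) := by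
  simp only [inflow, Fin.cases_succ]
  split_ifs <;> aesop

lemma interpDFA_mem_accept_iff (T : Fin (v.length + 1) → Finset σ) :
    T ∈ (interpDFA M v C).accept ↔
      ∃ j, ∃ q ∈ T j, ∃ u, M.evalFrom q u ∈ M.accept ∧ InterpW C u (v.drop j) [] := by
  simp only [interpDFA, Set.mem_ofPred_eq, interpW_nil_s13, List.drop_eq_nil_iff]
  constructor
  · rintro ⟨q, hq, hacc⟩
    exact ⟨_, q, hq, [], hacc, rfl, le_of_eq (Fin.val_last _).symm⟩
  · rintro ⟨j, q, hq, _, hacc, rfl, hj⟩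
    obtain rfl : j = Fin.last _ := Fin.ext (le_antisymm (Fin.is_le j) hj)
    exact ⟨q, hq, hacc⟩

lemma exists_mem_interpDFA_step_iff (T : Fin (v.length + 1) → Finset σ) (a : A) (x : List A) :
    (∃ j, ∃ q ∈ (interpDFA M v C).step T a j,
        ∃ u, M.evalFrom q u ∈ M.accept ∧ InterpW C u (v.drop j) x) ↔
      ∃ j, ∃ p ∈ T j, ∃ u, M.evalFrom p u ∈ M.accept ∧ InterpW C u (v.drop j) (a :: x) := by
  constructor
  · rintro ⟨j, q, hq, u, hu, hI⟩
    rcases Finset.mem_union.mp hq with hq | hq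
    · obtain ⟨p, hp, rfl⟩ := Finset.mem_image.mp hq
      exact ⟨j, p, hp, a :: u, hu, interpW_cons.mpr (Or.inl ⟨u, rfl, hI⟩)⟩
    · cases j using Fin.cases with
      | zero => simp at hq
      | succ k =>
        obtain ⟨rfl, p, hp, rfl | ⟨hC, rfl⟩⟩ := mem_inflow_succ.mp hq
        · exact ⟨k.castSucc, q, hp, u, hu, interpW_cons.mpr
            (Or.inr (Or.inl ⟨_, List.drop_castSucc_eq_cons v k, hI⟩))⟩
        · exact ⟨k.castSucc, p, hp, v.get k :: u, hu, interpW_cons.mpr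
            (Or.inr (Or.inr ⟨hC, u, _, rfl, List.drop_castSucc_eq_cons v k, hI⟩))⟩
  · rintro ⟨j, p, hp, u, hu, hI⟩
    rcases interpW_cons.mp hI with ⟨u', rfl, hI'⟩ | ⟨w, hw, hI'⟩ | ⟨hC, u', w, rfl, hw, hI'⟩
    · exact ⟨j, M.step p a, Finset.mem_union_left _ (Finset.mem_image_of_mem _ hp), u', hu, hI'⟩
    · obtain ⟨k, rfl, hk, rfl⟩ := List.exists_of_drop_eq_cons hw
      exact ⟨k.succ, p, Finset.mem_union_right _ (mem_inflow_succ.mpr ⟨hk, p, hp, Or.inl rfl⟩),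
        u, hu, hI'⟩
    · obtain ⟨k, rfl, hk, rfl⟩ := List.exists_of_drop_eq_cons hw
      exact ⟨k.succ, M.step p a, Finset.mem_union_right _
        (mem_inflow_succ.mpr ⟨hk, p, hp, Or.inr ⟨hC, rfl⟩⟩), u', hu, hI'⟩

lemma interpDFA_evalFrom_mem_accept (T : Fin (v.length + 1) → Finset σ) (x : List A) :
    (interpDFA M v C).evalFrom T x ∈ (interpDFA M v C).accept ↔
      ∃ j, ∃ q ∈ T j, ∃ u, M.evalFrom q u ∈ M.accept ∧ InterpW C u (v.drop j) x := by
  induction x generalizing T with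
  | nil => exact interpDFA_mem_accept_iff T
  | cons a x ih => rw [DFA.evalFrom_cons, ih, exists_mem_interpDFA_step_iff]

lemma mem_interpDFA_accepts (x : List A) :
    x ∈ (interpDFA M v C).accepts ↔ ∃ u ∈ M.accepts, InterpW C u v x := by
  rw [DFA.mem_accepts, DFA.eval, interpDFA_evalFrom_mem_accept]
  constructor
  · rintro ⟨j, q, hq, u, hu, hI⟩
    obtain ⟨rfl, rfl⟩ : j = 0 ∧ q = M.start := by
      simp only [interpDFA] at hq
      split_ifs at hq with hj
      · exact ⟨hj, Finset.mem_singleton.mp hq⟩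
      · simp at hq
    exact ⟨u, hu, hI⟩
  · rintro ⟨u, hu, hI⟩
    exact ⟨0, M.start, by simp [interpDFA], u, hu, hI⟩

section Acyclicity

variable [Fintype σ]

lemma inflow_subset_fixedPts {T : Fin (v.length + 1) → Finset σ} {z : List A} {a : A}
    (ha : a ∈ z) {j : Fin (v.length + 1)}
    (hT : ∀ k : Fin v.length, j = k.succ → T k.castSucc ⊆ M.fixedPts z) :
    inflow M v C T a j ⊆ M.fixedPts z := by
  cases j using Fin.cases with
  | zero => simp
  | succ k =>
    intro q hq
    obtain ⟨-, p, hp, rfl | ⟨-, rfl⟩⟩ := mem_inflow_succ.mp hq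
    · exact hT k rfl hp
    · rw [DFA.mem_fixedPts.mp (hT k rfl hp) a ha]
      exact hT k rfl hp

/-- Adding all points fixed by the letters of `z` absorbs the inflow, so that along `z`
each layer evolves by plain images under `M`. -/
lemma interpDFA_evalFrom_union_fixedPts {j : Fin (v.length + 1)}
    (hin : ∀ T z, (interpDFA M v C).evalFrom T z = T →
      ∀ a ∈ z, inflow M v C T a j ⊆ M.fixedPts z)
    (u w : List A) (T : Fin (v.length + 1) → Finset σ)
    (hT : (interpDFA M v C).evalFrom T (u ++ w) = T) :
    (interpDFA M v C).evalFrom T u j ∪ M.fixedPts (u ++ w) =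
      (T j ∪ M.fixedPts (u ++ w)).image (M.evalFrom · u) := by
  induction u generalizing w T with
  | nil => simp [Finset.image_id']
  | cons a u ih =>
    have hT' : (interpDFA M v C).evalFrom ((interpDFA M v C).step T a) (u ++ (w ++ [a])) =
        (interpDFA M v C).step T a := by
      rw [← List.append_assoc, DFA.evalFrom_append_singleton, ← DFA.evalFrom_cons,
        ← List.cons_append, hT]
    have hF : M.fixedPts (u ++ (w ++ [a])) = M.fixedPts (a :: u ++ w) := by
      refine DFA.fixedPts_congr fun b => ?_
      simp only [List.mem_append, List.mem_cons, List.cons_append]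
      tauto
    have hstep : (interpDFA M v C).step T a j ∪ M.fixedPts (a :: u ++ w) =
        (T j ∪ M.fixedPts (a :: u ++ w)).image (M.step · a) := by
      have ha : a ∈ a :: u ++ w := List.mem_cons_self
      rw [Finset.image_union, DFA.image_step_of_subset_fixedPts ha subset_rfl]
      exact Finset.union_assoc _ _ _ |>.trans
        (congrArg _ (Finset.union_eq_right.mpr (hin T _ hT a ha)))
    rw [DFA.evalFrom_cons, ← hF, ih _ _ hT', hF, hstep, Finset.image_image]
    rfl

lemma layer_subset_fixedPts_of_inflow (hM : M.Acyclic) {j : Fin (v.length + 1)}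
    (hin : ∀ T z, (interpDFA M v C).evalFrom T z = T →
      ∀ a ∈ z, inflow M v C T a j ⊆ M.fixedPts z)
    {T : Fin (v.length + 1) → Finset σ} {z : List A}
    (hT : (interpDFA M v C).evalFrom T z = T) : T j ⊆ M.fixedPts z := by
  have h := interpDFA_evalFrom_union_fixedPts hin z [] T (by rwa [List.append_nil])
  rw [List.append_nil, hT] at h
  intro p hp
  exact DFA.mem_fixedPts.mpr <| hM.step_eq_of_evalFrom_eq <|
    hM.evalFrom_eq_of_image_eq h.symm p (Finset.mem_union_left _ hp)

lemma layer_subset_fixedPts (hM : M.Acyclic) (j : Fin (v.length + 1))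
    {T : Fin (v.length + 1) → Finset σ} {z : List A}
    (hT : (interpDFA M v C).evalFrom T z = T) : T j ⊆ M.fixedPts z := by
  induction j using Fin.induction generalizing T z with
  | zero => exact layer_subset_fixedPts_of_inflow hM (fun _ _ _ _ _ => by simp) hT
  | succ k ih =>
    refine layer_subset_fixedPts_of_inflow hM (fun T z hT a ha => ?_) hT
    refine inflow_subset_fixedPts ha fun k' hk => ?_
    obtain rfl := Fin.succ_injective _ hk
    exact ih hT

lemma le_interpDFA_evalFrom {T : Fin (v.length + 1) → Finset σ} {z u : List A}
    (hT : ∀ j, T j ⊆ M.fixedPts z) (hu : ∀ a ∈ u, a ∈ z) :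
    T ≤ (interpDFA M v C).evalFrom T u := by
  induction u generalizing T with
  | nil => exact le_rfl
  | cons a u ih =>
    have ha : a ∈ z := hu a List.mem_cons_self
    have hstep : ∀ j, (interpDFA M v C).step T a j = T j ∪ inflow M v C T a j := fun j =>
      congrArg (· ∪ _) (DFA.image_step_of_subset_fixedPts ha (hT j))
    have hin : ∀ j, inflow M v C T a j ⊆ M.fixedPts z := fun j =>
      inflow_subset_fixedPts ha fun k _ => hT k.castSucc
    refine le_trans (fun j => ?_) (ih (fun j => ?_) fun b hb => hu b (List.mem_cons_of_mem a hb))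
    · rw [hstep]; exact Finset.subset_union_left
    · rw [hstep]; exact Finset.union_subset (hT j) (hin j)

lemma interpDFA_acyclic (hM : M.Acyclic) : (interpDFA M v C).Acyclic := by
  intro T T' u w hu hw
  have hT : (interpDFA M v C).evalFrom T (u ++ w) = T := by rw [DFA.evalFrom_of_append, hu, hw]
  have hT' : (interpDFA M v C).evalFrom T' (w ++ u) = T' := by
    rw [DFA.evalFrom_of_append, hw, hu]
  refine le_antisymm ?_ ?_
  · exact hu ▸ le_interpDFA_evalFrom (fun j => layer_subset_fixedPts hM j hT)
      fun a ha => List.mem_append_left w ha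
  · exact hw ▸ le_interpDFA_evalFrom (fun j => layer_subset_fixedPts hM j hT')
      fun a ha => List.mem_append_left u ha

end Acyclicity

end Construction

lemma RTrivial.interpL_singleton {L : Set (List A)} (hL : RTrivial L) (v : List A) (C : Set A) :
    RTrivial (interpL C L {v}) := by
  classical
  obtain ⟨σ, _, M, hM, hML⟩ := hL
  refine ⟨_, inferInstance, interpDFA M v C, interpDFA_acyclic hM, fun x => ?_⟩
  simp [mem_interpDFA_accepts, interpL, hML]

theorem stmt13 {A : Type*} (L : Set (List A)) (hL : RTrivial L)
    (F : Set (List A)) (hF : F.Finite) (C : Set A) : RTrivial (interpL C L F) := by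
  induction F, hF using Set.Finite.induction_on with
  | empty => rw [interpL_empty]; exact rTrivial_empty
  | insert _ _ ih => rw [interpL_insert]; exact (hL.interpL_singleton _ C).union ih
end

section
/- The language a(a+b)* = { w ∈ {a,b}* : w is nonempty and starts with a } is not piecewise-testable, even though it equals the shuffle a* ⧢ ab* of two piecewise-testable languages. -/
open List

variable {A : Type*}

/-- Every word of length ≤ k over `Bool` is a sublist of `(true·false)^k`. -/
lemma sub_ab : ∀ (k : ℕ) (w : List Bool), w.length ≤ k →
    w <+ (List.replicate k [true, false]).flatten := by
  intro k
  induction k with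
  | zero => intro w hw; simp at hw; simp [hw]
  | succ k ih =>
      intro w hw
      cases w with
      | nil => exact List.nil_sublist _
      | cons c w' =>
          rw [List.replicate_succ, List.flatten_cons]
          have h1 : [c] <+ [true, false] := by cases c <;> simp
          have h2 : w' <+ (List.replicate k [true, false]).flatten :=
            ih w' (by simpa using Nat.succ_le_succ_iff.mp hw)
          exact List.Sublist.append h1 h2

lemma mem_extractW {x : List Bool} {K : Finset (Fin x.length)} {a : Bool}
    (h : a ∈ extractW x K) : ∃ i ∈ K, x.get i = a := by
  unfold extractW at h
  obtain ⟨i, hi, rfl⟩ := List.mem_map.mp h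
  exact ⟨i, by simpa using (List.mem_filter.mp hi).2, rfl⟩

lemma extractW_cons_s16 (a : Bool) (t : List Bool) (K : Finset (Fin (a :: t).length)) :
    extractW (a :: t) K =
      (if (⟨0, Nat.succ_pos _⟩ : Fin (a :: t).length) ∈ K then [a] else []) ++
        (((List.finRange t.length).map Fin.succ).filter (fun i => i ∈ K)).map (a :: t).get := by
  unfold extractW
  show ((List.finRange (t.length + 1)).filter _).map _ = _
  rw [List.finRange_succ, List.filter_cons]
  split <;> simp_all [Fin.ext_iff]

/-- Characterization of `true :: falseⁿ` by pieces of length ≤ 2. -/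
lemma char4 (w : List Bool) :
    (∃ n : ℕ, w = true :: List.replicate n false) ↔
      ([true] <+ w ∧ ¬ [true, true] <+ w ∧ ¬ [false, true] <+ w) := by
  constructor
  · rintro ⟨n, rfl⟩
    refine ⟨by simp, ?_, ?_⟩
    · intro h
      have := h.count_le true
      simp [List.count_cons, List.count_replicate] at this
    · intro h
      rw [List.sublist_cons_iff] at h
      rcases h with h | ⟨r, hr, _⟩
      · have htm : true ∈ List.replicate n false := h.subset (by simp)
        simpa using List.eq_of_mem_replicate htm
      · simp at hr
  · rintro ⟨h1, h2, h3⟩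
    rw [List.singleton_sublist] at h1
    cases w with
    | nil => simp at h1
    | cons c t =>
        cases c with
        | false =>
            exfalso
            apply h3
            have : true ∈ t := by simpa using h1
            exact (List.singleton_sublist.mpr this).cons₂ false
        | true =>
            refine ⟨t.length, ?_⟩
            have ht : ∀ c ∈ t, c = false := by
              intro c hc
              by_contra hne
              have hct : c = true := by cases c <;> simp_all
              subst hct
              exact h2 ((List.singleton_sublist.mpr hc).cons₂ true)
            have := List.eq_replicate_iff.mpr ⟨rfl, ht⟩
            rw [← this]

theorem stmt16 :
    ¬ PT {w : List Bool | w ≠ [] ∧ w.head? = some true} ∧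
    {w : List Bool | w ≠ [] ∧ w.head? = some true} =
      shuffleL {w : List Bool | ∀ c ∈ w, c = true}
        {w : List Bool | ∃ n : ℕ, w = true :: List.replicate n false} ∧
    PT {w : List Bool | ∀ c ∈ w, c = true} ∧
    PT {w : List Bool | ∃ n : ℕ, w = true :: List.replicate n false} := by
  refine ⟨?_, ?_, ?_, ?_⟩
  · -- not piecewise testable
    rintro ⟨k, hk⟩
    set u := (List.replicate (k+1) [true, false]).flatten with hu
    have hsim : SimK k u (false :: u) := by
      intro w hw
      have h1 : w <+ u := sub_ab (k+1) w (hw.trans (Nat.le_succ k))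
      exact iff_of_true h1 (h1.cons false)
    have := hk u (false :: u) hsim
    have hu1 : u ∈ {w : List Bool | w ≠ [] ∧ w.head? = some true} := by
      constructor <;> simp [hu, List.replicate_succ]
    have hu2 : (false :: u) ∈ {w : List Bool | w ≠ [] ∧ w.head? = some true} := this.mp hu1
    simpa using hu2.2
  · -- the shuffle decomposition
    ext x
    constructor
    · rintro ⟨hne, hhd⟩
      match x, hhd with
      | true :: t, _ =>
        clear hne hhd
        set z : Fin (true :: t).length := ⟨0, Nat.succ_pos _⟩ with hz
        set K : Finset (Fin (true :: t).length) :=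
          Finset.univ.filter (fun i => i ≠ z ∧ (true :: t).get i = true) with hKdef
        set K' : Finset (Fin (true :: t).length) :=
          Finset.univ.filter (fun i => i = z ∨ (true :: t).get i = false) with hK'def
        refine ⟨extractW (true :: t) K, ?_, extractW (true :: t) K', ?_, K, K', ?_, rfl, rfl, ?_⟩
        · intro c hc
          obtain ⟨i, hi, rfl⟩ := mem_extractW hc
          exact (Finset.mem_filter.mp hi).2.2
        · have h0 : z ∈ K' := by simp [hK'def]
          rw [extractW_cons_s16, if_pos h0]
          set rest := (((List.finRange t.length).map Fin.succ).filter
              (fun i => i ∈ K')).map (true :: t).get with hrest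
          refine ⟨rest.length, ?_⟩
          have hall : ∀ c ∈ rest, c = false := by
            intro c hc
            obtain ⟨i, hi, rfl⟩ := List.mem_map.mp hc
            have h1 := List.mem_filter.mp hi
            obtain ⟨j, _, rfl⟩ := List.mem_map.mp h1.1
            have h2 : Fin.succ j ∈ K' := by simpa using h1.2
            have h3 := (Finset.mem_filter.mp h2).2
            rcases h3 with h3 | h3
            · exact absurd (congrArg Fin.val h3) (by simp [hz])
            · exact h3
          have := List.eq_replicate_iff.mpr ⟨rfl, hall⟩
          rw [← this]
          rfl
        · ext i
          simp only [hKdef, hK'def, Finset.mem_union, Finset.mem_filter, Finset.mem_univ,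
            true_and, iff_true]
          by_cases h : i = z
          · right; left; exact h
          · cases hgi : (true :: t).get i
            · right; right; rfl
            · left; exact ⟨h, rfl⟩
        · intro a ha
          exfalso
          obtain ⟨i, hi, rfl⟩ := mem_extractW ha
          rw [Finset.mem_inter] at hi
          have h1 := (Finset.mem_filter.mp hi.1).2
          have h2 := (Finset.mem_filter.mp hi.2).2
          rcases h2 with h2 | h2
          · exact h1.1 h2
          · rw [h1.2] at h2; simp at h2
    · rintro ⟨u, hu, v, ⟨n, rfl⟩, K, K', hun, hK, hK', -⟩
      match x, K, K', hun, hK, hK' with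
      | [], K, K', hun, hK, hK' => simp [extractW] at hK'
      | a :: t, K, K', hun, hK, hK' =>
        refine ⟨List.cons_ne_nil _ _, ?_⟩
        have h0 : (⟨0, Nat.succ_pos _⟩ : Fin (a :: t).length) ∈ K ∪ K' := by
          rw [hun]; exact Finset.mem_univ _
        suffices ha : a = true by rw [ha]; rfl
        rcases Finset.mem_union.mp h0 with h | h
        · have hmem : a ∈ extractW (a :: t) K := by
            rw [extractW_cons_s16, if_pos h]; simp
          rw [hK] at hmem
          exact hu a hmem
        · rw [extractW_cons_s16, if_pos h] at hK'
          simpa using congrArg List.head? hK'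
  · -- a* is PT
    refine ⟨1, fun u v h => ?_⟩
    have hf := h [false] (by simp)
    simp only [List.singleton_sublist] at hf
    constructor <;> intro hall c hc <;> by_contra hne
    · have : c = false := by cases c <;> simp_all
      subst this
      have := hall false (hf.mpr hc)
      simp at this
    · have : c = false := by cases c <;> simp_all
      subst this
      have := hall false (hf.mp hc)
      simp at this
  · -- ab* is PT
    refine ⟨2, fun u v h => ?_⟩
    show (∃ n : ℕ, u = true :: List.replicate n false) ↔
      (∃ n : ℕ, v = true :: List.replicate n false)
    rw [char4, char4, h [true] (by simp), h [true, true] (by simp), h [false, true] (by simp)]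
end
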